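/- The squared norm of the discrete Legendre orthogonal polynomial is given by the normalization factor of Neuman and Schonbach: for every N ≥ 1 and every n with 0 ≤ n ≤ N − 1, Σ_{k=0}^{N−1} D_n(k;N)² = (N+n)^{(n+1)} / ((2n+1) · (N−1)^{(n)}). -/

import Mathlib

/-!
Pair `D_n` with the shifted falling factorials `(k - N)^{(s)}`. The upper Chu–Vandermonde
identity gives `∑_{k<N} k^{(i)} (k - N)^{(s)} = (-1)^s i! s! C(N+s, i+s+1)`; after cancelling
`(N-1)^{(i)}`, the pairing is a multiple of `∑_i (-1)^i C(n,i) (n+i)!/(i+s+1)!`, an `n`-th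
forward difference. For `s < n` the summand is a falling factorial of degree `n - s - 1 < n` in
`i`, so it vanishes; for `s = n` it is the `n`-th difference of `1/x`, equal to `n!²/(2n+1)!`.
Newton's expansion of `k^{(i)}` around `N` shows that for `i ≤ n` pairing `D_n` with `k^{(i)}`
is the same as with `(k - N)^{(i)}`; hence `∑ D_n² = c_n ∑ D_n(k) (k - N)^{(n)}`, where `c_n` is
the leading coefficient.
-/

open Finset

/-- The fading factorial `x^{(i)} = ∏_{j=0}^{i−1} (x − j)`. -/
noncomputable def fadingFactorial (x : ℝ) (i : ℕ) : ℝ :=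
  ∏ j ∈ Finset.range i, (x - (j : ℝ))

/-- The unnormalized discrete Legendre orthogonal polynomial (DLOP) of degree `n`
with `N` samples: `D n k = ∑_{i=0}^{n} (−1)^i C(n,i) C(n+i,i) k^{(i)} / (N−1)^{(i)}`. -/
noncomputable def dlop (N n k : ℕ) : ℝ :=
  ∑ i ∈ Finset.range (n + 1),
    (-1 : ℝ) ^ i * (n.choose i : ℝ) * ((n + i).choose i : ℝ) *
      fadingFactorial (k : ℝ) i / fadingFactorial ((N : ℝ) - 1) i

open scoped Nat fwdDiff

section FadingFactorial

theorem fadingFactorial_eq_eval (x : ℝ) (i : ℕ) :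
    fadingFactorial x i = (descPochhammer ℝ i).eval x :=
  (descPochhammer_eval_eq_prod_range i x).symm

@[simp]
theorem fadingFactorial_zero (x : ℝ) : fadingFactorial x 0 = 1 := by
  simp [fadingFactorial]

theorem fadingFactorial_succ (x : ℝ) (i : ℕ) :
    fadingFactorial x (i + 1) = fadingFactorial x i * (x - i) := by
  simp only [fadingFactorial_eq_eval, descPochhammer_succ_eval]

theorem fadingFactorial_succ' (x : ℝ) (i : ℕ) :
    fadingFactorial x (i + 1) = x * fadingFactorial (x - 1) i := by
  simp [fadingFactorial_eq_eval, descPochhammer_succ_left]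

theorem fadingFactorial_add (x : ℝ) (a b : ℕ) :
    fadingFactorial x (a + b) = fadingFactorial x a * fadingFactorial (x - a) b := by
  simp [fadingFactorial_eq_eval, ← descPochhammer_mul]

theorem fadingFactorial_natCast (a b : ℕ) :
    fadingFactorial a b = a.descFactorial b := by
  rw [fadingFactorial_eq_eval, descPochhammer_eval_eq_descFactorial]

theorem fadingFactorial_reflect (x : ℝ) (n : ℕ) :
    fadingFactorial (n - 1 - x) n = (-1) ^ n * fadingFactorial x n := by
  rw [fadingFactorial_eq_eval, fadingFactorial_eq_eval, descPochhammer_eval_eq_ascPochhammer,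
    show (n : ℝ) - 1 - x - n + 1 = -x by ring, ascPochhammer_eval_neg_eq_descPochhammer]

theorem fadingFactorial_pos {x : ℝ} {n : ℕ} (h : (n : ℝ) - 1 < x) :
    0 < fadingFactorial x n := by
  rw [fadingFactorial_eq_eval]
  exact descPochhammer_pos h

theorem fwdDiff_fadingFactorial (d : ℕ) :
    Δ_[1] (fun x : ℝ ↦ fadingFactorial x (d + 1)) =
      fun x ↦ (d + 1) * fadingFactorial x d := by
  funext x
  rw [fwdDiff, fadingFactorial_succ', add_sub_cancel_right, fadingFactorial_succ]
  ring

theorem fwdDiff_iter_fadingFactorial (m d : ℕ) :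
    (Δ_[1])^[m] (fun x : ℝ ↦ fadingFactorial x d) =
      fun x ↦ (d.descFactorial m : ℝ) * fadingFactorial x (d - m) := by
  induction m generalizing d with
  | zero => simp
  | succ m ih =>
    rw [Function.iterate_succ_apply]
    cases d with
    | zero =>
      simp only [fadingFactorial_zero, fwdDiff_const]
      rw [Function.iterate_fixed (fwdDiff_const 1 0)]
      simp
    | succ d =>
      rw [fwdDiff_fadingFactorial, show (fun x : ℝ ↦ (d + 1 : ℝ) * fadingFactorial x d) =
        ((d + 1 : ℝ) • fun x ↦ fadingFactorial x d) from rfl, fwdDiff_iter_const_smul, ih]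
      funext x
      simp only [Pi.smul_apply, smul_eq_mul, Nat.succ_descFactorial_succ, Nat.succ_sub_succ]
      push_cast
      ring

end FadingFactorial

section AlternatingSums

theorem sum_range_alternating_choose_mul_eq_fwdDiff_iter (f : ℝ → ℝ) (x : ℝ) (n : ℕ) :
    ∑ i ∈ range (n + 1), (-1) ^ i * (n.choose i : ℝ) * f (x + i) =
      (-1) ^ n * (Δ_[1])^[n] f x := by
  rw [fwdDiff_iter_eq_sum_shift, mul_sum]
  refine sum_congr rfl fun i hi ↦ ?_
  obtain ⟨j, rfl⟩ := Nat.exists_eq_add_of_le (Nat.le_of_lt_succ (mem_range.1 hi))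
  simp only [Nat.add_sub_cancel_left, zsmul_eq_mul, nsmul_eq_mul, mul_one]
  push_cast
  have hj : ((-1 : ℝ) ^ j) * (-1) ^ j = 1 := by rw [← mul_pow]; norm_num
  linear_combination (-((-1 : ℝ) ^ i * ((i + j).choose i : ℝ) * f (x + i))) * hj

theorem sum_range_alternating_choose_mul_fadingFactorial {d n : ℕ} (h : d < n) (y : ℝ) :
    ∑ i ∈ range (n + 1), (-1) ^ i * (n.choose i : ℝ) * fadingFactorial (y + i) d = 0 := by
  rw [sum_range_alternating_choose_mul_eq_fwdDiff_iter (fun x ↦ fadingFactorial x d),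
    fwdDiff_iter_fadingFactorial, Nat.descFactorial_eq_zero_iff_lt.2 h]
  simp

theorem fwdDiff_iter_inv (n : ℕ) {x : ℝ} (hx : 0 < x) :
    (Δ_[1])^[n] (fun x : ℝ ↦ x⁻¹) x = (-1) ^ n * n ! / fadingFactorial (x + n) (n + 1) := by
  induction n generalizing x with
  | zero => simp [fadingFactorial]
  | succ n ih =>
    rw [Function.iterate_succ_apply', fwdDiff, ih (by positivity), ih hx]
    have hP : 0 < fadingFactorial (x + n) n := fadingFactorial_pos (by linarith)
    have h1 : fadingFactorial (x + 1 + n) (n + 1) = (x + n + 1) * fadingFactorial (x + n) n := by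
      rw [fadingFactorial_succ']; ring_nf
    have h2 : fadingFactorial (x + n) (n + 1) = fadingFactorial (x + n) n * x := by
      rw [fadingFactorial_succ]; ring_nf
    have h3 : fadingFactorial (x + ↑(n + 1)) (n + 1 + 1) =
        (x + n + 1) * (fadingFactorial (x + n) n * x) := by
      rw [fadingFactorial_succ', ← h2]; push_cast; ring_nf
    rw [h1, h2, h3, Nat.factorial_succ]
    field_simp
    push_cast
    ring

theorem sum_range_alternating_choose_div (n : ℕ) :
    ∑ i ∈ range (n + 1), (-1) ^ i * (n.choose i : ℝ) / (n + 1 + i) =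
      (n ! : ℝ) ^ 2 / (2 * n + 1)! := by
  have h := sum_range_alternating_choose_mul_eq_fwdDiff_iter (fun x ↦ x⁻¹) (n + 1) n
  rw [fwdDiff_iter_inv n (by positivity), ← mul_div_assoc, ← mul_assoc, ← pow_add,
    Even.neg_one_pow ⟨n, rfl⟩, one_mul] at h
  have hff : (n ! : ℝ) * fadingFactorial ((n : ℝ) + 1 + n) (n + 1) = (2 * n + 1)! := by
    rw [show (n : ℝ) + 1 + n = ((2 * n + 1 : ℕ) : ℝ) by push_cast; ring,
      fadingFactorial_natCast]
    have h := Nat.factorial_mul_descFactorial (show n + 1 ≤ 2 * n + 1 by omega)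
    rw [show 2 * n + 1 - (n + 1) = n by omega] at h
    exact_mod_cast h
  rw [← hff, sq, mul_div_mul_left _ _ (by positivity)]
  simpa [div_eq_mul_inv] using h

end AlternatingSums

theorem Nat.sum_range_choose_mul_sub_choose (i j m : ℕ) :
    ∑ k ∈ range (m + 1), k.choose i * (m - k).choose j = (m + 1).choose (i + j + 1) := by
  induction m generalizing j with
  | zero => cases i <;> cases j <;> simp [Nat.choose_eq_zero_of_lt]
  | succ m ih =>
    rw [sum_range_succ, Nat.sub_self]
    cases j with
    | zero =>
      have h0 := ih 0
      simp only [Nat.choose_zero_right, mul_one] at h0 ⊢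
      rw [h0, Nat.choose_succ_succ' (m + 1), add_comm]
    | succ j =>
      have hpascal : ∀ k ∈ range (m + 1), k.choose i * (m + 1 - k).choose (j + 1) =
          k.choose i * (m - k).choose j + k.choose i * (m - k).choose (j + 1) := fun k hk ↦ by
        rw [Nat.sub_add_comm (Nat.le_of_lt_succ (mem_range.1 hk)), Nat.choose_succ_succ',
          Nat.mul_add]
      rw [sum_congr rfl hpascal, sum_add_distrib, ih, ih, Nat.choose_zero_succ, mul_zero,
        add_zero, Nat.choose_succ_succ' (m + 1), add_assoc]

theorem sum_fadingFactorial_mul_fadingFactorial_sub {N : ℕ} (hN : 0 < N) (i s : ℕ) :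
    ∑ k ∈ range N, fadingFactorial k i * fadingFactorial ((k : ℝ) - N) s =
      (-1) ^ s * (i ! * s ! * (N + s).choose (i + s + 1)) := by
  have hterm : ∀ k ∈ range N, fadingFactorial k i * fadingFactorial ((k : ℝ) - N) s =
      (-1) ^ s * (i ! * s ! * (k.choose i * (N - 1 + s - k).choose s : ℕ)) := fun k hk ↦ by
    have hk := mem_range.1 hk
    have hrefl : ((N - 1 + s - k : ℕ) : ℝ) = s - 1 - ((k : ℝ) - N) := by
      rw [Nat.cast_sub (by omega), Nat.cast_add, Nat.cast_sub hN]
      ring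
    have hsub : fadingFactorial ((k : ℝ) - N) s =
        (-1) ^ s * fadingFactorial (N - 1 + s - k : ℕ) s := by
      rw [hrefl, fadingFactorial_reflect, ← mul_assoc, ← pow_add, Even.neg_one_pow ⟨s, rfl⟩,
        one_mul]
    rw [hsub, fadingFactorial_natCast, fadingFactorial_natCast,
      Nat.descFactorial_eq_factorial_mul_choose, Nat.descFactorial_eq_factorial_mul_choose]
    push_cast
    ring
  have hvandermonde : ∑ k ∈ range N, k.choose i * (N - 1 + s - k).choose s =
      (N + s).choose (i + s + 1) := by
    have h := Nat.sum_range_choose_mul_sub_choose i s (N - 1 + s)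
    rw [show N - 1 + s + 1 = N + s by omega, sum_range_add] at h
    have htail : ∑ t ∈ range s, (N + t).choose i * (N - 1 + s - (N + t)).choose s = 0 :=
      sum_eq_zero fun t ht ↦ by
        rw [Nat.choose_eq_zero_of_lt (n := N - 1 + s - (N + t)) (by have := mem_range.1 ht; omega),
          mul_zero]
    rwa [htail, add_zero] at h
  rw [sum_congr rfl hterm, ← mul_sum, ← mul_sum, ← Nat.cast_sum, hvandermonde]

theorem fadingFactorial_add_natCast (y : ℝ) (m i : ℕ) :
    fadingFactorial (y + m) i =
      ∑ r ∈ range (m + 1), m.choose r * (i.descFactorial r * fadingFactorial y (i - r)) := by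
  have h := shift_eq_sum_fwdDiff_iter 1 (fun x : ℝ ↦ fadingFactorial x i) m y
  simp only [nsmul_eq_mul, mul_one, fwdDiff_iter_fadingFactorial] at h
  exact h

theorem fadingFactorial_natCast_sub_one_ne_zero {N i : ℕ} (h : i < N) :
    fadingFactorial ((N : ℝ) - 1) i ≠ 0 :=
  (fadingFactorial_pos (by simpa using h)).ne'

noncomputable def dlopCoeff (N n i : ℕ) : ℝ :=
  (-1) ^ i * n.choose i * (n + i).choose i / fadingFactorial ((N : ℝ) - 1) i

theorem dlop_eq_sum (N n k : ℕ) :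
    dlop N n k = ∑ i ∈ range (n + 1), dlopCoeff N n i * fadingFactorial k i :=
  sum_congr rfl fun _ _ ↦ by rw [dlopCoeff, div_mul_eq_mul_div]

theorem dlopCoeff_mul {N : ℕ} (n : ℕ) {i : ℕ} (hi : i < N) (s : ℕ) :
    dlopCoeff N n i * (i ! * s ! * (N + s).choose (i + s + 1)) =
      s ! * fadingFactorial ((N : ℝ) + s) (s + 1) / n ! *
        ((-1) ^ i * n.choose i * ((n + i)! / (i + s + 1)!)) := by
  have hchoose : ((N + s).choose (i + s + 1) : ℝ) * (i + s + 1)! =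
      fadingFactorial ((N : ℝ) + s) (s + 1) * fadingFactorial ((N : ℝ) - 1) i := by
    rw [show (N : ℝ) - 1 = N + s - ↑(s + 1) by push_cast; ring, ← fadingFactorial_add,
      show s + 1 + i = i + s + 1 by ring, ← Nat.cast_add, fadingFactorial_natCast,
      Nat.descFactorial_eq_factorial_mul_choose]
    push_cast
    ring
  have hfact : ((n + i).choose i : ℝ) * i ! * n ! = (n + i)! := by
    have h := Nat.choose_mul_factorial_mul_factorial (Nat.le_add_left i n)
    rw [Nat.add_sub_cancel] at h
    exact_mod_cast h
  have hne := fadingFactorial_natCast_sub_one_ne_zero hi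
  rw [dlopCoeff]
  field_simp
  linear_combination (n.choose i : ℝ) * (n + i).choose i * i ! * n ! * hchoose
    + (n.choose i : ℝ) * fadingFactorial ((N : ℝ) - 1) i * fadingFactorial ((N : ℝ) + s) (s + 1)
      * hfact

section Pairing

variable {N n : ℕ}

theorem sum_dlop_mul_fadingFactorial_sub (hn : n < N) (s : ℕ) :
    ∑ k ∈ range N, dlop N n k * fadingFactorial ((k : ℝ) - N) s =
      (-1) ^ s * (s ! * fadingFactorial ((N : ℝ) + s) (s + 1) / n !) *
        ∑ i ∈ range (n + 1), (-1) ^ i * n.choose i * ((n + i)! / (i + s + 1)! : ℝ) := by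
  simp_rw [dlop_eq_sum, sum_mul]
  rw [sum_comm, mul_sum]
  refine sum_congr rfl fun i hi ↦ ?_
  have hiN : i < N := by have := mem_range.1 hi; omega
  simp_rw [mul_assoc, ← mul_sum]
  rw [sum_fadingFactorial_mul_fadingFactorial_sub (by omega), mul_left_comm, dlopCoeff_mul n hiN]
  ring

theorem sum_dlop_mul_fadingFactorial_sub_of_lt (hn : n < N) {s : ℕ} (hs : s < n) :
    ∑ k ∈ range N, dlop N n k * fadingFactorial ((k : ℝ) - N) s = 0 := by
  have hquot : ∀ i,
      ((n + i)! / (i + s + 1)! : ℝ) = fadingFactorial ((n : ℝ) + i) (n - s - 1) := by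
    intro i
    have h := Nat.factorial_mul_descFactorial (show n - s - 1 ≤ n + i by omega)
    rw [show n + i - (n - s - 1) = i + s + 1 by omega] at h
    rw [div_eq_iff (by positivity), ← Nat.cast_add, fadingFactorial_natCast, mul_comm]
    exact_mod_cast h.symm
  simp_rw [sum_dlop_mul_fadingFactorial_sub hn, hquot,
    sum_range_alternating_choose_mul_fadingFactorial (show n - s - 1 < n by omega), mul_zero]

theorem sum_dlop_mul_fadingFactorial_sub_self (hn : n < N) :
    ∑ k ∈ range N, dlop N n k * fadingFactorial ((k : ℝ) - N) n =
      (-1) ^ n * (n ! : ℝ) ^ 2 * fadingFactorial ((N : ℝ) + n) (n + 1) / (2 * n + 1)! := by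
  have hquot : ∀ i, ((n + i)! / (i + n + 1)! : ℝ) = 1 / (n + 1 + i) := by
    intro i
    rw [show i + n + 1 = n + i + 1 by ring, Nat.factorial_succ]
    push_cast
    field_simp
    ring
  simp_rw [sum_dlop_mul_fadingFactorial_sub hn, hquot, mul_one_div,
    sum_range_alternating_choose_div]
  field_simp

theorem sum_dlop_mul_fadingFactorial (hn : n < N) {i : ℕ} (hi : i ≤ n) :
    ∑ k ∈ range N, dlop N n k * fadingFactorial k i =
      ∑ k ∈ range N, dlop N n k * fadingFactorial ((k : ℝ) - N) i := by
  have hexpand : ∀ k : ℕ, fadingFactorial k i = ∑ r ∈ range (N + 1),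
      N.choose r * (i.descFactorial r * fadingFactorial ((k : ℝ) - N) (i - r)) := fun k ↦ by
    rw [← fadingFactorial_add_natCast, sub_add_cancel]
  simp_rw [hexpand, mul_sum]
  rw [sum_comm, sum_eq_single 0]
  · simp
  · intro r _ hr
    rcases le_or_gt r i with hri | hri
    · rw [← mul_zero ((N.choose r : ℝ) * i.descFactorial r),
        ← sum_dlop_mul_fadingFactorial_sub_of_lt hn (show i - r < n by omega), mul_sum]
      exact sum_congr rfl fun _ _ ↦ by ring
    · simp [Nat.descFactorial_eq_zero_iff_lt.2 hri]
  · simp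

end Pairing

theorem sum_dlop_sq {N n : ℕ} (hn : n < N) :
    ∑ k ∈ range N, dlop N n k ^ 2 =
      dlopCoeff N n n * ∑ k ∈ range N, dlop N n k * fadingFactorial ((k : ℝ) - N) n := by
  have hexpand : ∀ k ∈ range N, dlop N n k ^ 2 =
      ∑ i ∈ range (n + 1), dlopCoeff N n i * (dlop N n k * fadingFactorial k i) := by
    intro k _
    rw [sq, dlop_eq_sum N n k, mul_sum, ← dlop_eq_sum]
    exact sum_congr rfl fun _ _ ↦ by ring
  rw [sum_congr rfl hexpand, sum_comm]
  simp_rw [← mul_sum]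
  rw [sum_eq_single_of_mem n (self_mem_range_succ n), sum_dlop_mul_fadingFactorial hn le_rfl]
  intro i hi hin
  have hin : i < n := lt_of_le_of_ne (Nat.le_of_lt_succ (mem_range.1 hi)) hin
  rw [sum_dlop_mul_fadingFactorial hn hin.le, sum_dlop_mul_fadingFactorial_sub_of_lt hn hin,
    mul_zero]

theorem stmt_11 (N n : ℕ) (hN : 1 ≤ N) (hn : n ≤ N - 1) :
    ∑ k ∈ Finset.range N, (dlop N n k) ^ 2 =
      fadingFactorial ((N : ℝ) + n) (n + 1) /
        ((2 * (n : ℝ) + 1) * fadingFactorial ((N : ℝ) - 1) n) := by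
  have hnN : n < N := by omega
  have hcentral : ((2 * n).choose n : ℝ) * n ! * n ! = (2 * n)! := by
    have h := Nat.choose_mul_factorial_mul_factorial (show n ≤ 2 * n by omega)
    rw [show 2 * n - n = n by omega] at h
    exact_mod_cast h
  have hsign : (-1 : ℝ) ^ (n * 2) = 1 := Even.neg_one_pow ⟨n, by ring⟩
  have hne := fadingFactorial_natCast_sub_one_ne_zero hnN
  rw [sum_dlop_sq hnN, sum_dlop_mul_fadingFactorial_sub_self hnN, dlopCoeff, Nat.choose_self,
    ← two_mul, Nat.factorial_succ]
  push_cast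
  field_simp
  linear_combination fadingFactorial ((N : ℝ) + n) (n + 1) * hcentral
    + ((2 * n).choose n : ℝ) * n ! ^ 2 * fadingFactorial ((N : ℝ) + n) (n + 1) * hsign
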